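/- arXiv:0912.3159 — 2 statements merged into one kernel-verified Lean document; each statement's English description precedes it below -/
import Mathlib

section
/- Let H be a braided bialgebra over a field k with braid c, let (A,s) be a left H-braided module algebra with action ρ, and let F ∈ H⊗H be a twisting element such that (s⊗H)∘(H⊗s)(F⊗a) = a⊗F for all a ∈ A. Then A_F, the vector space A equipped with the multiplication μ_A∘F_l, where F_l(a⊗b) := (ρ⊗ρ)∘(H⊗s⊗A)(F⊗a⊗b), is an associative k-algebra with unit 1_A. -/
open TensorProduct

noncomputable section
namespace Paper

variable {k : Type*} [Field k]

section Combinators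

variable {M N P Q M' N' P' M'' : Type*}
  [AddCommMonoid M] [AddCommMonoid N] [AddCommMonoid P] [AddCommMonoid Q]
  [AddCommMonoid M'] [AddCommMonoid N'] [AddCommMonoid P'] [AddCommMonoid M'']
  [Module k M] [Module k N] [Module k P] [Module k Q]
  [Module k M'] [Module k N'] [Module k P'] [Module k M'']

/-- `(s ⊗ id) ∘ (id ⊗ s)` : braid a pair of factors past `P`. -/
def braidPast (f : N ⊗[k] P →ₗ[k] P ⊗[k] N') (g : M ⊗[k] P →ₗ[k] P ⊗[k] M') :
    (M ⊗[k] N) ⊗[k] P →ₗ[k] P ⊗[k] (M' ⊗[k] N') :=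
  (TensorProduct.assoc k P M' N').toLinearMap
    ∘ₗ g.rTensor N'
    ∘ₗ (TensorProduct.assoc k M P N').symm.toLinearMap
    ∘ₗ f.lTensor M
    ∘ₗ (TensorProduct.assoc k M N P).toLinearMap

def braidUnder (f : M ⊗[k] N →ₗ[k] N' ⊗[k] M') (g : M' ⊗[k] P →ₗ[k] P' ⊗[k] M'') :
    M ⊗[k] (N ⊗[k] P) →ₗ[k] (N' ⊗[k] P') ⊗[k] M'' :=
  (TensorProduct.assoc k N' P' M'').symm.toLinearMap
    ∘ₗ g.lTensor N'
    ∘ₗ (TensorProduct.assoc k N' M' P).toLinearMap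
    ∘ₗ f.rTensor P
    ∘ₗ (TensorProduct.assoc k M N P).symm.toLinearMap

def midMap (f : N ⊗[k] P →ₗ[k] P' ⊗[k] N') :
    (M ⊗[k] N) ⊗[k] (P ⊗[k] Q) →ₗ[k] (M ⊗[k] P') ⊗[k] (N' ⊗[k] Q) :=
  (TensorProduct.assoc k M P' (N' ⊗[k] Q)).symm.toLinearMap
    ∘ₗ ((TensorProduct.assoc k P' N' Q).toLinearMap.lTensor M)
    ∘ₗ ((f.rTensor Q).lTensor M)
    ∘ₗ ((TensorProduct.assoc k N P Q).symm.toLinearMap.lTensor M)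
    ∘ₗ (TensorProduct.assoc k M N (P ⊗[k] Q)).toLinearMap

end Combinators

section Braided

variable (k)
variable (H : Type*) [Ring H] [Algebra k H]

/-- `(H, comul, counit, c)` is a braided bialgebra. -/
structure IsBraidedBialgebra (comul : H →ₗ[k] H ⊗[k] H) (counit : H →ₗ[k] k)
    (c : H ⊗[k] H ≃ₗ[k] H ⊗[k] H) : Prop where
  coassoc : (TensorProduct.assoc k H H H).toLinearMap ∘ₗ comul.rTensor H ∘ₗ comul
      = comul.lTensor H ∘ₗ comul
  counit_left : (TensorProduct.lid k H).toLinearMap ∘ₗ counit.rTensor H ∘ₗ comul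
      = LinearMap.id
  counit_right : (TensorProduct.rid k H).toLinearMap ∘ₗ counit.lTensor H ∘ₗ comul
      = LinearMap.id
  braid_eq :
      c.toLinearMap.rTensor H
          ∘ₗ ((TensorProduct.assoc k H H H).symm.toLinearMap
              ∘ₗ c.toLinearMap.lTensor H ∘ₗ (TensorProduct.assoc k H H H).toLinearMap)
          ∘ₗ c.toLinearMap.rTensor H
        = ((TensorProduct.assoc k H H H).symm.toLinearMap
              ∘ₗ c.toLinearMap.lTensor H ∘ₗ (TensorProduct.assoc k H H H).toLinearMap)
          ∘ₗ c.toLinearMap.rTensor H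
          ∘ₗ ((TensorProduct.assoc k H H H).symm.toLinearMap
              ∘ₗ c.toLinearMap.lTensor H ∘ₗ (TensorProduct.assoc k H H H).toLinearMap)
  c_one_left : ∀ h : H, c ((1 : H) ⊗ₜ[k] h) = h ⊗ₜ[k] (1 : H)
  c_mul_left : c.toLinearMap ∘ₗ (LinearMap.mul' k H).rTensor H
      = (LinearMap.mul' k H).lTensor H ∘ₗ braidPast c.toLinearMap c.toLinearMap
  c_one_right : ∀ h : H, c (h ⊗ₜ[k] (1 : H)) = (1 : H) ⊗ₜ[k] h
  c_mul_right : c.toLinearMap ∘ₗ (LinearMap.mul' k H).lTensor H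
      = (LinearMap.mul' k H).rTensor H ∘ₗ braidUnder c.toLinearMap c.toLinearMap
  c_counit_left : (TensorProduct.rid k H).toLinearMap ∘ₗ counit.lTensor H ∘ₗ c.toLinearMap
      = (TensorProduct.lid k H).toLinearMap ∘ₗ counit.rTensor H
  c_comul_left : comul.lTensor H ∘ₗ c.toLinearMap
      = braidPast c.toLinearMap c.toLinearMap ∘ₗ comul.rTensor H
  c_counit_right : (TensorProduct.lid k H).toLinearMap ∘ₗ counit.rTensor H ∘ₗ c.toLinearMap
      = (TensorProduct.rid k H).toLinearMap ∘ₗ counit.lTensor H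
  c_comul_right : comul.rTensor H ∘ₗ c.toLinearMap
      = braidUnder c.toLinearMap c.toLinearMap ∘ₗ comul.lTensor H
  comul_mul : comul ∘ₗ LinearMap.mul' k H
      = TensorProduct.map (LinearMap.mul' k H) (LinearMap.mul' k H)
          ∘ₗ midMap c.toLinearMap ∘ₗ TensorProduct.map comul comul
  comul_one : comul 1 = (1 : H) ⊗ₜ[k] (1 : H)
  counit_mul : ∀ x y : H, counit (x * y) = counit x * counit y
  counit_one : counit 1 = 1

variable (A : Type*) [Ring A] [Algebra k A]

/-- `s` is a left transposition of the braided bialgebra `(H, comul, counit, c)` on `A`. -/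
structure IsBrTransposition (comul : H →ₗ[k] H ⊗[k] H) (counit : H →ₗ[k] k)
    (c : H ⊗[k] H ≃ₗ[k] H ⊗[k] H) (s : H ⊗[k] A ≃ₗ[k] A ⊗[k] H) : Prop where
  unit_H : ∀ a : A, s ((1 : H) ⊗ₜ[k] a) = a ⊗ₜ[k] (1 : H)
  mul_H : s.toLinearMap ∘ₗ (LinearMap.mul' k H).rTensor A
      = (LinearMap.mul' k H).lTensor A ∘ₗ braidPast s.toLinearMap s.toLinearMap
  counit_compat : (TensorProduct.rid k A).toLinearMap ∘ₗ counit.lTensor A ∘ₗ s.toLinearMap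
      = (TensorProduct.lid k A).toLinearMap ∘ₗ counit.rTensor A
  comul_compat : comul.lTensor A ∘ₗ s.toLinearMap
      = braidPast s.toLinearMap s.toLinearMap ∘ₗ comul.rTensor A
  unit_A : ∀ h : H, s (h ⊗ₜ[k] (1 : A)) = (1 : A) ⊗ₜ[k] h
  mul_A : s.toLinearMap ∘ₗ (LinearMap.mul' k A).lTensor H
      = (LinearMap.mul' k A).rTensor H ∘ₗ braidUnder s.toLinearMap s.toLinearMap
  braid_compat : braidPast s.toLinearMap s.toLinearMap ∘ₗ c.toLinearMap.rTensor A
      = c.toLinearMap.lTensor A ∘ₗ braidPast s.toLinearMap s.toLinearMap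

/-- The action `H ⊗ A → A` attached to an algebra morphism `H →ₐ Module.End k A`. -/
def brActMap (ρ : H →ₐ[k] Module.End k A) : H ⊗[k] A →ₗ[k] A :=
  TensorProduct.lift ρ.toLinearMap

/-- `(A, s)` is a left `H`-braided module algebra via `ρ`. -/
structure IsBrModuleAlgebra (comul : H →ₗ[k] H ⊗[k] H) (counit : H →ₗ[k] k)
    (c : H ⊗[k] H ≃ₗ[k] H ⊗[k] H) (s : H ⊗[k] A ≃ₗ[k] A ⊗[k] H)
    (ρ : H →ₐ[k] Module.End k A) : Prop where
  compat_s : s.toLinearMap ∘ₗ (brActMap k H A ρ).lTensor H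
        ∘ₗ (TensorProduct.assoc k H H A).toLinearMap
      = (brActMap k H A ρ).rTensor H
        ∘ₗ (TensorProduct.assoc k H A H).symm.toLinearMap
        ∘ₗ s.toLinearMap.lTensor H
        ∘ₗ (TensorProduct.assoc k H H A).toLinearMap
        ∘ₗ c.toLinearMap.rTensor A
  mul_act : ∀ (h : H) (a b : A), ρ h (a * b)
      = (LinearMap.mul' k A
          ∘ₗ TensorProduct.map (brActMap k H A ρ) (brActMap k H A ρ)
          ∘ₗ midMap s.toLinearMap)
        ((comul h) ⊗ₜ[k] (a ⊗ₜ[k] b))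
  one_act : ∀ h : H, ρ h (1 : A) = counit h • (1 : A)

variable {A}

/-- The multiplication of the twisted tensor product algebra `H ⊗_c H`. -/
def mulB (c : H ⊗[k] H ≃ₗ[k] H ⊗[k] H) :
    (H ⊗[k] H) ⊗[k] (H ⊗[k] H) →ₗ[k] H ⊗[k] H :=
  TensorProduct.map (LinearMap.mul' k H) (LinearMap.mul' k H) ∘ₗ midMap c.toLinearMap

/-- The multiplication of the twisted triple tensor product algebra `H ⊗_c H ⊗_c H`. -/
def mulC (c : H ⊗[k] H ≃ₗ[k] H ⊗[k] H) :
    (H ⊗[k] (H ⊗[k] H)) ⊗[k] (H ⊗[k] (H ⊗[k] H)) →ₗ[k] H ⊗[k] (H ⊗[k] H) :=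
  TensorProduct.map (LinearMap.mul' k H) (mulB k H c)
    ∘ₗ midMap (braidPast c.toLinearMap c.toLinearMap)

/-- `F ∈ H ⊗ H` is a twisting element based on the braided bialgebra
`(H, comul, counit, c)`. -/
def IsTwistingElement (comul : H →ₗ[k] H ⊗[k] H) (counit : H →ₗ[k] k)
    (c : H ⊗[k] H ≃ₗ[k] H ⊗[k] H) (F : H ⊗[k] H) : Prop :=
  (TensorProduct.lid k H) (counit.rTensor H F) = 1
  ∧ (TensorProduct.rid k H) (counit.lTensor H F) = 1
  ∧ mulC k H c
      (((TensorProduct.assoc k H H H) (comul.rTensor H F))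
        ⊗ₜ[k] ((TensorProduct.assoc k H H H) (F ⊗ₜ[k] (1 : H))))
    = mulC k H c ((comul.lTensor H F) ⊗ₜ[k] ((1 : H) ⊗ₜ[k] F))
  ∧ ∀ h : H, braidPast c.toLinearMap c.toLinearMap (F ⊗ₜ[k] h) = h ⊗ₜ[k] F

end Braided

end Paper

/-!
Write `x • (a ⊗ b)` for the action `(ρ ⊗ ρ) ∘ (H ⊗ s ⊗ A)` of `H ⊗_c H` on `A ⊗ A`, so that the
product of `A_F` is `μ (F • (a ⊗ b))`; the unit laws are then the counit conditions on `F`.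
A braided tensor product of modules is a module over the braided tensor product of the algebras
as soon as the braiding is multiplicative and commutes with the action; hence `H ⊗_c H ⊗_c H`
acts on `A ⊗ A ⊗ A`. The module-algebra axiom rewrites `(a ∘ b) ∘ d` as
`μ₃ (((Δ ⊗ id) F) (F ⊗ 1) • (a ⊗ b ⊗ d))` and `a ∘ (b ∘ d)` as
`μ₃ (((id ⊗ Δ) F) (1 ⊗ F) • (a ⊗ b ⊗ d))`, where the hypothesis on `F ⊗ a` lets `1 ⊗ F` pass `a`;
the cocycle condition on `F` identifies the two.
-/

namespace Paper

section Combinators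

variable {k : Type*} [Field k]
variable {M N P Q M' N' P' Q' X Y : Type*}
  [AddCommMonoid M] [AddCommMonoid N] [AddCommMonoid P] [AddCommMonoid Q]
  [AddCommMonoid M'] [AddCommMonoid N'] [AddCommMonoid P'] [AddCommMonoid Q']
  [AddCommMonoid X] [AddCommMonoid Y]
  [Module k M] [Module k N] [Module k P] [Module k Q]
  [Module k M'] [Module k N'] [Module k P'] [Module k Q'] [Module k X] [Module k Y]

@[simp] lemma braidPast_tmul (f : N ⊗[k] P →ₗ[k] P ⊗[k] N') (g : M ⊗[k] P →ₗ[k] P ⊗[k] M')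
    (m : M) (n : N) (p : P) :
    braidPast f g ((m ⊗ₜ[k] n) ⊗ₜ[k] p)
      = TensorProduct.assoc k P M' N'
          (g.rTensor N' ((TensorProduct.assoc k M P N').symm (m ⊗ₜ[k] f (n ⊗ₜ[k] p)))) := by
  simp [braidPast]

@[simp] lemma braidUnder_tmul (f : M ⊗[k] N →ₗ[k] N' ⊗[k] M') (g : M' ⊗[k] P →ₗ[k] P' ⊗[k] Q')
    (m : M) (n : N) (p : P) :
    braidUnder f g (m ⊗ₜ[k] (n ⊗ₜ[k] p))
      = (TensorProduct.assoc k N' P' Q').symm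
          (g.lTensor N' (TensorProduct.assoc k N' M' P (f (m ⊗ₜ[k] n) ⊗ₜ[k] p))) := by
  simp [braidUnder]

@[simp] lemma midMap_tmul (f : N ⊗[k] P →ₗ[k] P' ⊗[k] N') (m : M) (n : N) (p : P) (q : Q) :
    midMap f ((m ⊗ₜ[k] n) ⊗ₜ[k] (p ⊗ₜ[k] q))
      = (TensorProduct.assoc k M P' (N' ⊗[k] Q)).symm
          (m ⊗ₜ[k] TensorProduct.assoc k P' N' Q (f (n ⊗ₜ[k] p) ⊗ₜ[k] q)) := by
  simp [midMap]

lemma braidPast_comp_rTensor_assoc (f : M ⊗[k] P →ₗ[k] P ⊗[k] M')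
    (g : N ⊗[k] P →ₗ[k] P ⊗[k] N') (h : Q ⊗[k] P →ₗ[k] P ⊗[k] Q') :
    braidPast (braidPast h g) f ∘ₗ (TensorProduct.assoc k M N Q).toLinearMap.rTensor P
      = (TensorProduct.assoc k M' N' Q').toLinearMap.lTensor P
          ∘ₗ braidPast h (braidPast g f) := by
  refine TensorProduct.ext' fun x p => ?_
  induction x using TensorProduct.induction_on with
  | zero => simp
  | add u v hu hv => simp only [map_add, add_tmul, hu, hv]
  | tmul w q => ?_
  induction w using TensorProduct.induction_on with
  | zero => simp
  | add u v hu hv => simp only [LinearMap.comp_apply, map_add, add_tmul] at hu hv ⊢; rw [hu, hv]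
  | tmul m n => ?_
  simp only [LinearMap.comp_apply, LinearMap.rTensor_tmul, LinearEquiv.coe_coe,
    TensorProduct.assoc_tmul, braidPast_tmul]
  induction h (q ⊗ₜ[k] p) using TensorProduct.induction_on with
  | zero => simp
  | add u v hu hv => simp only [map_add, tmul_add, hu, hv]
  | tmul p₁ q₁ => ?_
  simp only [TensorProduct.assoc_symm_tmul, LinearMap.rTensor_tmul, braidPast_tmul]
  induction g (n ⊗ₜ[k] p₁) using TensorProduct.induction_on with
  | zero => simp
  | add u v hu hv => simp only [map_add, add_tmul, tmul_add, hu, hv]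
  | tmul p₂ n₁ => ?_
  simp only [TensorProduct.assoc_tmul, TensorProduct.assoc_symm_tmul, LinearMap.rTensor_tmul]
  induction f (m ⊗ₜ[k] p₂) using TensorProduct.induction_on with
  | zero => simp
  | add u v hu hv => simp only [map_add, add_tmul, hu, hv]
  | tmul p₃ m₁ => simp

lemma braidPast_comp_rTensor_rTensor (f : N ⊗[k] P →ₗ[k] P ⊗[k] N')
    {g : M ⊗[k] P →ₗ[k] P ⊗[k] M'} {g' : X ⊗[k] P →ₗ[k] P ⊗[k] Y}
    {θ : M →ₗ[k] X} {θ' : M' →ₗ[k] Y} (hθ : g' ∘ₗ θ.rTensor P = θ'.lTensor P ∘ₗ g) :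
    braidPast f g' ∘ₗ (θ.rTensor N).rTensor P = (θ'.rTensor N').lTensor P ∘ₗ braidPast f g := by
  refine TensorProduct.ext' fun w p => ?_
  induction w using TensorProduct.induction_on with
  | zero => simp
  | add u v hu hv => simp only [LinearMap.comp_apply, map_add, add_tmul] at hu hv ⊢; rw [hu, hv]
  | tmul m n => ?_
  simp only [LinearMap.comp_apply, LinearMap.rTensor_tmul, braidPast_tmul]
  induction f (n ⊗ₜ[k] p) using TensorProduct.induction_on with
  | zero => simp
  | add u v hu hv => simp only [map_add, tmul_add, hu, hv]
  | tmul p₁ n₁ => ?_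
  simp only [TensorProduct.assoc_symm_tmul, LinearMap.rTensor_tmul]
  rw [show g' (θ m ⊗ₜ[k] p₁) = θ'.lTensor P (g (m ⊗ₜ[k] p₁)) by
    simpa using LinearMap.congr_fun hθ (m ⊗ₜ[k] p₁)]
  induction g (m ⊗ₜ[k] p₁) using TensorProduct.induction_on with
  | zero => simp
  | add u v hu hv => simp only [map_add, add_tmul, hu, hv]
  | tmul p₂ m₁ => simp

lemma braidPast_comp_rTensor_lTensor {f : N ⊗[k] P →ₗ[k] P ⊗[k] N'}
    {f' : X ⊗[k] P →ₗ[k] P ⊗[k] Y} (g : M ⊗[k] P →ₗ[k] P ⊗[k] M')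
    {θ : N →ₗ[k] X} {θ' : N' →ₗ[k] Y} (hθ : f' ∘ₗ θ.rTensor P = θ'.lTensor P ∘ₗ f) :
    braidPast f' g ∘ₗ (θ.lTensor M).rTensor P = (θ'.lTensor M').lTensor P ∘ₗ braidPast f g := by
  refine TensorProduct.ext' fun w p => ?_
  induction w using TensorProduct.induction_on with
  | zero => simp
  | add u v hu hv => simp only [LinearMap.comp_apply, map_add, add_tmul] at hu hv ⊢; rw [hu, hv]
  | tmul m n => ?_
  simp only [LinearMap.comp_apply, LinearMap.rTensor_tmul, LinearMap.lTensor_tmul, braidPast_tmul]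
  rw [show f' (θ n ⊗ₜ[k] p) = θ'.lTensor P (f (n ⊗ₜ[k] p)) by
    simpa using LinearMap.congr_fun hθ (n ⊗ₜ[k] p)]
  induction f (n ⊗ₜ[k] p) using TensorProduct.induction_on with
  | zero => simp
  | add u v hu hv => simp only [map_add, tmul_add, hu, hv]
  | tmul p₁ n₁ => ?_
  simp only [TensorProduct.assoc_symm_tmul, LinearMap.rTensor_tmul, LinearMap.lTensor_tmul]
  induction g (m ⊗ₜ[k] p₁) using TensorProduct.induction_on with
  | zero => simp
  | add u v hu hv => simp only [map_add, add_tmul, hu, hv]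
  | tmul p₂ m₁ => simp

lemma comp_rTensor_symm_of_comp_rTensor (e : X ≃ₗ[k] Y) {T₁ : X ⊗[k] P →ₗ[k] P ⊗[k] X}
    {T₂ : Y ⊗[k] P →ₗ[k] P ⊗[k] Y}
    (h : T₂ ∘ₗ e.toLinearMap.rTensor P = e.toLinearMap.lTensor P ∘ₗ T₁) :
    T₁ ∘ₗ e.symm.toLinearMap.rTensor P = e.symm.toLinearMap.lTensor P ∘ₗ T₂ :=
  calc T₁ ∘ₗ e.symm.toLinearMap.rTensor P
      = e.symm.toLinearMap.lTensor P ∘ₗ (e.toLinearMap.lTensor P ∘ₗ T₁)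
          ∘ₗ e.symm.toLinearMap.rTensor P := by
        simp only [← LinearMap.comp_assoc, ← LinearMap.lTensor_comp, LinearEquiv.symm_comp,
          LinearMap.lTensor_id, LinearMap.id_comp]
    _ = e.symm.toLinearMap.lTensor P ∘ₗ T₂ := by
        simp only [← h, LinearMap.comp_assoc, ← LinearMap.rTensor_comp, LinearEquiv.comp_symm,
          LinearMap.rTensor_id, LinearMap.comp_id]

lemma comp_rTensor_comp_of_comp_rTensor {T₁ : X ⊗[k] P →ₗ[k] P ⊗[k] X}
    {T₂ : Y ⊗[k] P →ₗ[k] P ⊗[k] Y} {T₃ : Q ⊗[k] P →ₗ[k] P ⊗[k] Q} {f : X →ₗ[k] Y} {g : Y →ₗ[k] Q}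
    (hf : T₂ ∘ₗ f.rTensor P = f.lTensor P ∘ₗ T₁) (hg : T₃ ∘ₗ g.rTensor P = g.lTensor P ∘ₗ T₂) :
    T₃ ∘ₗ (g ∘ₗ f).rTensor P = (g ∘ₗ f).lTensor P ∘ₗ T₁ := by
  rw [LinearMap.rTensor_comp, LinearMap.lTensor_comp, ← LinearMap.comp_assoc, hg,
    LinearMap.comp_assoc, hf, LinearMap.comp_assoc]

end Combinators

section BraidedTensorMap

variable {k : Type*} [Field k]
variable {B₁ B₂ V₁ V₂ M N P Q P' N' V W : Type*}
  [AddCommMonoid B₁] [AddCommMonoid B₂] [AddCommMonoid V₁] [AddCommMonoid V₂]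
  [AddCommMonoid M] [AddCommMonoid N] [AddCommMonoid P] [AddCommMonoid Q]
  [AddCommMonoid P'] [AddCommMonoid N'] [AddCommMonoid V] [AddCommMonoid W]
  [Module k B₁] [Module k B₂] [Module k V₁] [Module k V₂] [Module k M] [Module k N]
  [Module k P] [Module k Q] [Module k P'] [Module k N'] [Module k V] [Module k W]

/-- Both the multiplication of a braided tensor product of algebras and its action on a
tensor product of modules. -/
def braidedTensorMap (t : N ⊗[k] P →ₗ[k] P' ⊗[k] N') (a₁ : M ⊗[k] P' →ₗ[k] V)
    (a₂ : N' ⊗[k] Q →ₗ[k] W) : (M ⊗[k] N) ⊗[k] (P ⊗[k] Q) →ₗ[k] V ⊗[k] W :=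
  TensorProduct.map a₁ a₂ ∘ₗ midMap t

@[simp] lemma braidedTensorMap_tmul (t : N ⊗[k] P →ₗ[k] P' ⊗[k] N') (a₁ : M ⊗[k] P' →ₗ[k] V)
    (a₂ : N' ⊗[k] Q →ₗ[k] W) (m : M) (n : N) (p : P) (q : Q) :
    braidedTensorMap t a₁ a₂ ((m ⊗ₜ[k] n) ⊗ₜ[k] (p ⊗ₜ[k] q))
      = TensorProduct.map a₁ a₂ ((TensorProduct.assoc k M P' (N' ⊗[k] Q)).symm
          (m ⊗ₜ[k] TensorProduct.assoc k P' N' Q (t (n ⊗ₜ[k] p) ⊗ₜ[k] q))) := by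
  simp [braidedTensorMap]

def IsAction (m : B₁ ⊗[k] B₁ →ₗ[k] B₁) (a : B₁ ⊗[k] V₁ →ₗ[k] V₁) : Prop :=
  ∀ (x y : B₁) (v : V₁), a (m (x ⊗ₜ[k] y) ⊗ₜ[k] v) = a (x ⊗ₜ[k] a (y ⊗ₜ[k] v))

theorem isAction_braidedTensorMap {m₁ : B₁ ⊗[k] B₁ →ₗ[k] B₁} {m₂ : B₂ ⊗[k] B₂ →ₗ[k] B₂}
    {a₁ : B₁ ⊗[k] V₁ →ₗ[k] V₁} {a₂ : B₂ ⊗[k] V₂ →ₗ[k] V₂}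
    (h₁ : IsAction m₁ a₁) (h₂ : IsAction m₂ a₂)
    {t : B₂ ⊗[k] V₁ →ₗ[k] V₁ ⊗[k] B₂} {c : B₂ ⊗[k] B₁ →ₗ[k] B₁ ⊗[k] B₂}
    (ht_mul : t ∘ₗ m₂.rTensor V₁ = m₂.lTensor V₁ ∘ₗ braidPast t t)
    (ht_act : ∀ b x, t (b ⊗ₜ[k] a₁ x) = a₁.rTensor B₂ (braidUnder c t (b ⊗ₜ[k] x))) :
    IsAction (braidedTensorMap c m₁ m₂) (braidedTensorMap t a₁ a₂) := by
  have ht_mul' : ∀ y v, t (m₂ y ⊗ₜ[k] v) = m₂.lTensor V₁ (braidPast t t (y ⊗ₜ[k] v)) :=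
    fun y v => by simpa using LinearMap.congr_fun ht_mul (y ⊗ₜ[k] v)
  rw [IsAction] at h₁ h₂ ⊢
  intro X Y v
  induction X using TensorProduct.induction_on with
  | zero => simp
  | add u w hu hw => simp only [map_add, add_tmul, hu, hw]
  | tmul h h' => ?_
  induction Y using TensorProduct.induction_on with
  | zero => simp
  | add u w hu hw => simp only [map_add, tmul_add, add_tmul, hu, hw]
  | tmul g g' => ?_
  induction v using TensorProduct.induction_on with
  | zero => simp
  | add u w hu hw => simp only [map_add, tmul_add, hu, hw]
  | tmul a b => ?_
  obtain ⟨Sz, hz⟩ := TensorProduct.exists_finset (c (h' ⊗ₜ[k] g))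
  obtain ⟨Sy, hy⟩ := TensorProduct.exists_finset (t (g' ⊗ₜ[k] a))
  simp only [braidedTensorMap_tmul, hz, hy, ht_mul', ht_act, braidPast_tmul, braidUnder_tmul,
    TensorProduct.sum_tmul, TensorProduct.tmul_sum, map_sum, TensorProduct.assoc_tmul,
    TensorProduct.assoc_symm_tmul, LinearMap.rTensor_tmul, LinearMap.lTensor_tmul,
    TensorProduct.map_tmul]
  rw [Finset.sum_comm]
  refine Finset.sum_congr rfl fun p _ => Finset.sum_congr rfl fun q _ => ?_
  obtain ⟨Sw, hw⟩ := TensorProduct.exists_finset (t (q.2 ⊗ₜ[k] p.1))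
  simp only [hw, TensorProduct.sum_tmul, TensorProduct.tmul_sum, map_sum,
    TensorProduct.assoc_tmul, TensorProduct.assoc_symm_tmul,
    LinearMap.rTensor_tmul, LinearMap.lTensor_tmul, TensorProduct.map_tmul, h₁, h₂]

lemma braidedTensorMap_assoc {H₁ H₂ H₃ A₁ A₂ A₃ V₁ V₂ V₃ : Type*}
    [AddCommMonoid H₁] [AddCommMonoid H₂] [AddCommMonoid H₃] [AddCommMonoid A₁]
    [AddCommMonoid A₂] [AddCommMonoid A₃] [AddCommMonoid V₁] [AddCommMonoid V₂]
    [AddCommMonoid V₃] [Module k H₁] [Module k H₂] [Module k H₃] [Module k A₁] [Module k A₂]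
    [Module k A₃] [Module k V₁] [Module k V₂] [Module k V₃]
    (t₁₂ : H₂ ⊗[k] A₁ →ₗ[k] A₁ ⊗[k] H₂) (t₁₃ : H₃ ⊗[k] A₁ →ₗ[k] A₁ ⊗[k] H₃)
    (t₂₃ : H₃ ⊗[k] A₂ →ₗ[k] A₂ ⊗[k] H₃) (a₁ : H₁ ⊗[k] A₁ →ₗ[k] V₁)
    (a₂ : H₂ ⊗[k] A₂ →ₗ[k] V₂) (a₃ : H₃ ⊗[k] A₃ →ₗ[k] V₃)
    (x : (H₁ ⊗[k] H₂) ⊗[k] H₃) (v : (A₁ ⊗[k] A₂) ⊗[k] A₃) :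
    braidedTensorMap (braidPast t₁₃ t₁₂) a₁ (braidedTensorMap t₂₃ a₂ a₃)
        (TensorProduct.assoc k H₁ H₂ H₃ x ⊗ₜ[k] TensorProduct.assoc k A₁ A₂ A₃ v)
      = TensorProduct.assoc k V₁ V₂ V₃
          (braidedTensorMap (braidUnder t₁₃ t₂₃) (braidedTensorMap t₁₂ a₁ a₂) a₃ (x ⊗ₜ[k] v)) := by
  induction x using TensorProduct.induction_on with
  | zero => simp
  | add u w hu hw => simp only [map_add, add_tmul, hu, hw]
  | tmul x₁₂ x₃ => ?_
  induction x₁₂ using TensorProduct.induction_on with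
  | zero => simp
  | add u w hu hw => simp only [map_add, add_tmul, hu, hw]
  | tmul x₁ x₂ => ?_
  induction v using TensorProduct.induction_on with
  | zero => simp
  | add u w hu hw => simp only [map_add, tmul_add, hu, hw]
  | tmul v₁₂ v₃ => ?_
  induction v₁₂ using TensorProduct.induction_on with
  | zero => simp
  | add u w hu hw => simp only [map_add, add_tmul, tmul_add, hu, hw]
  | tmul v₁ v₂ => ?_
  simp only [TensorProduct.assoc_tmul, braidedTensorMap_tmul, braidPast_tmul, braidUnder_tmul]
  induction t₁₃ (x₃ ⊗ₜ[k] v₁) using TensorProduct.induction_on with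
  | zero => simp
  | add u w hu hw => simp only [map_add, tmul_add, add_tmul, hu, hw]
  | tmul v₁' x₃' => ?_
  obtain ⟨S₁₂, h₁₂⟩ := TensorProduct.exists_finset (t₁₂ (x₂ ⊗ₜ[k] v₁'))
  obtain ⟨S₂₃, h₂₃⟩ := TensorProduct.exists_finset (t₂₃ (x₃' ⊗ₜ[k] v₂))
  simp [h₁₂, h₂₃, TensorProduct.sum_tmul, TensorProduct.tmul_sum]
  exact Finset.sum_comm

end BraidedTensorMap

section Transposition

variable {k : Type*} [Field k]
variable {H A : Type*} [AddCommMonoid H] [AddCommMonoid A] [Module k H] [Module k A]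
variable (t : H ⊗[k] A →ₗ[k] A ⊗[k] H)

lemma braidPast_comp_rTensor_midMap {c : H ⊗[k] H →ₗ[k] H ⊗[k] H}
    (hc : braidPast t t ∘ₗ c.rTensor A = c.lTensor A ∘ₗ braidPast t t) :
    braidPast (braidPast t t) (braidPast t t)
        ∘ₗ (midMap c : (H ⊗[k] H) ⊗[k] (H ⊗[k] H) →ₗ[k] _).rTensor A
      = (midMap c : (H ⊗[k] H) ⊗[k] (H ⊗[k] H) →ₗ[k] _).lTensor A
        ∘ₗ braidPast (braidPast t t) (braidPast t t) := by
  -- `midMap c` is a composite of five maps (associators and `c`), each compatible with braiding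
  have hassoc := braidPast_comp_rTensor_assoc t t t
  have sq₁ := braidPast_comp_rTensor_assoc t t (braidPast t t)
  have sq₂ := braidPast_comp_rTensor_lTensor t (comp_rTensor_symm_of_comp_rTensor _ hassoc)
  have sq₃ := braidPast_comp_rTensor_lTensor t (braidPast_comp_rTensor_rTensor t hc)
  have sq₄ := braidPast_comp_rTensor_lTensor t hassoc
  have sq₅ := comp_rTensor_symm_of_comp_rTensor _ sq₁
  refine comp_rTensor_comp_of_comp_rTensor ?_ sq₅
  refine comp_rTensor_comp_of_comp_rTensor ?_ sq₄
  refine comp_rTensor_comp_of_comp_rTensor ?_ sq₃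
  exact comp_rTensor_comp_of_comp_rTensor sq₁ sq₂

lemma braidPast_comp_rTensor_map {m : H ⊗[k] H →ₗ[k] H}
    (hm : t ∘ₗ m.rTensor A = m.lTensor A ∘ₗ braidPast t t) :
    braidPast t t ∘ₗ (TensorProduct.map m m).rTensor A
      = (TensorProduct.map m m).lTensor A ∘ₗ braidPast (braidPast t t) (braidPast t t) := by
  rw [← LinearMap.rTensor_comp_lTensor]
  exact comp_rTensor_comp_of_comp_rTensor (braidPast_comp_rTensor_lTensor (braidPast t t) hm)
    (braidPast_comp_rTensor_rTensor t hm)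

lemma braidPast_comp_rTensor_braidedTensorMap {m : H ⊗[k] H →ₗ[k] H} {c : H ⊗[k] H →ₗ[k] H ⊗[k] H}
    (hm : t ∘ₗ m.rTensor A = m.lTensor A ∘ₗ braidPast t t)
    (hc : braidPast t t ∘ₗ c.rTensor A = c.lTensor A ∘ₗ braidPast t t) :
    braidPast t t ∘ₗ (braidedTensorMap c m m).rTensor A
      = (braidedTensorMap c m m).lTensor A ∘ₗ braidPast (braidPast t t) (braidPast t t) :=
  comp_rTensor_comp_of_comp_rTensor (braidPast_comp_rTensor_midMap t hc)
    (braidPast_comp_rTensor_map t hm)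

lemma braidPast_tmul_act {a : H ⊗[k] A →ₗ[k] A} {c : H ⊗[k] H →ₗ[k] H ⊗[k] H}
    (ha : ∀ h x, t (h ⊗ₜ[k] a x) = a.rTensor H (braidUnder c t (h ⊗ₜ[k] x)))
    (y : H ⊗[k] H) (x : H ⊗[k] A) :
    braidPast t t (y ⊗ₜ[k] a x)
      = a.rTensor (H ⊗[k] H) (braidUnder (braidPast c c) (braidPast t t) (y ⊗ₜ[k] x)) := by
  induction y using TensorProduct.induction_on with
  | zero => simp
  | add u w hu hw => simp only [map_add, add_tmul, hu, hw]
  | tmul h h' => ?_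
  induction x using TensorProduct.induction_on with
  | zero => simp
  | add u w hu hw => simp only [map_add, tmul_add, hu, hw]
  | tmul g a₀ => ?_
  obtain ⟨S₁, h₁⟩ := TensorProduct.exists_finset (c (h' ⊗ₜ[k] g))
  simp only [braidPast_tmul, braidUnder_tmul, ha, h₁, TensorProduct.assoc_tmul,
    TensorProduct.assoc_symm_tmul, LinearMap.rTensor_tmul, LinearMap.lTensor_tmul,
    TensorProduct.sum_tmul, TensorProduct.tmul_sum, map_sum]
  refine Finset.sum_congr rfl fun p _ => ?_
  obtain ⟨S₂, h₂⟩ := TensorProduct.exists_finset (t (p.2 ⊗ₜ[k] a₀))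
  obtain ⟨S₃, h₃⟩ := TensorProduct.exists_finset (c (h ⊗ₜ[k] p.1))
  simp only [h₂, h₃, ha, braidPast_tmul, braidUnder_tmul, TensorProduct.sum_tmul,
    TensorProduct.tmul_sum, map_sum, TensorProduct.assoc_tmul, TensorProduct.assoc_symm_tmul,
    LinearMap.rTensor_tmul, LinearMap.lTensor_tmul]
  rw [Finset.sum_comm]
  refine Finset.sum_congr rfl fun r _ => Finset.sum_congr rfl fun q _ => ?_
  obtain ⟨S₄, h₄⟩ := TensorProduct.exists_finset (t (r.2 ⊗ₜ[k] q.1))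
  simp only [h₄, TensorProduct.sum_tmul, TensorProduct.tmul_sum, map_sum,
    TensorProduct.assoc_tmul, TensorProduct.assoc_symm_tmul, LinearMap.rTensor_tmul]

end Transposition

section ModuleAlgebra

variable {k : Type*} [Field k]
variable {H A : Type*} [Ring H] [Algebra k H] [Ring A] [Algebra k A]
variable {comul : H →ₗ[k] H ⊗[k] H} {counit : H →ₗ[k] k}
variable {c : H ⊗[k] H ≃ₗ[k] H ⊗[k] H} {s : H ⊗[k] A ≃ₗ[k] A ⊗[k] H}
variable {ρ : H →ₐ[k] Module.End k A}

variable (k A) in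
def mul₃ : A ⊗[k] (A ⊗[k] A) →ₗ[k] A :=
  LinearMap.mul' k A ∘ₗ (LinearMap.mul' k A).lTensor A

lemma mul₃_assoc (z : (A ⊗[k] A) ⊗[k] A) :
    mul₃ k A (TensorProduct.assoc k A A A z)
      = LinearMap.mul' k A ((LinearMap.mul' k A).rTensor A z) := by
  induction z using TensorProduct.induction_on with
  | zero => simp
  | add u w hu hw => simp only [map_add, hu, hw]
  | tmul w d => ?_
  induction w using TensorProduct.induction_on with
  | zero => simp
  | add u w hu hw => simp only [map_add, add_tmul, hu, hw]
  | tmul a b => simp [mul₃, mul_assoc]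

variable (s ρ) in
def act₂ : (H ⊗[k] H) ⊗[k] (A ⊗[k] A) →ₗ[k] A ⊗[k] A :=
  braidedTensorMap s.toLinearMap (brActMap k H A ρ) (brActMap k H A ρ)

variable (s ρ) in
def act₃ : (H ⊗[k] (H ⊗[k] H)) ⊗[k] (A ⊗[k] (A ⊗[k] A)) →ₗ[k] A ⊗[k] (A ⊗[k] A) :=
  braidedTensorMap (braidPast s.toLinearMap s.toLinearMap) (brActMap k H A ρ) (act₂ s ρ)

@[simp] lemma brActMap_tmul (h : H) (a : A) : brActMap k H A ρ (h ⊗ₜ[k] a) = ρ h a := rfl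

lemma isAction_brActMap : IsAction (LinearMap.mul' k H) (brActMap k H A ρ) :=
  fun x y a => by simp [map_mul]

lemma IsBrModuleAlgebra.s_tmul_brActMap (hma : IsBrModuleAlgebra k H A comul counit c s ρ)
    (h : H) (x : H ⊗[k] A) :
    s (h ⊗ₜ[k] brActMap k H A ρ x)
      = (brActMap k H A ρ).rTensor H (braidUnder c.toLinearMap s.toLinearMap (h ⊗ₜ[k] x)) := by
  simpa [braidUnder] using
    LinearMap.congr_fun hma.compat_s ((TensorProduct.assoc k H H A).symm (h ⊗ₜ[k] x))

lemma IsBrModuleAlgebra.act_mul' (hma : IsBrModuleAlgebra k H A comul counit c s ρ)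
    (h : H) (w : A ⊗[k] A) :
    ρ h (LinearMap.mul' k A w) = LinearMap.mul' k A (act₂ s ρ (comul h ⊗ₜ[k] w)) := by
  induction w using TensorProduct.induction_on with
  | zero => simp
  | add u w hu hw => simp only [map_add, tmul_add, hu, hw]
  | tmul a b => simpa [act₂, braidedTensorMap] using hma.mul_act h a b

lemma isAction_act₂ (hs : IsBrTransposition k H A comul counit c s)
    (hma : IsBrModuleAlgebra k H A comul counit c s ρ) :
    IsAction (mulB k H c) (act₂ s ρ) :=
  isAction_braidedTensorMap isAction_brActMap isAction_brActMap hs.mul_H hma.s_tmul_brActMap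

lemma isAction_act₃ (hs : IsBrTransposition k H A comul counit c s)
    (hma : IsBrModuleAlgebra k H A comul counit c s ρ) :
    IsAction (mulC k H c) (act₃ s ρ) :=
  isAction_braidedTensorMap isAction_brActMap (isAction_act₂ hs hma)
    (braidPast_comp_rTensor_braidedTensorMap _ hs.mul_H hs.braid_compat)
    (braidPast_tmul_act _ hma.s_tmul_brActMap)

lemma mul'_act₂_one_tmul (hs : IsBrTransposition k H A comul counit c s)
    (hma : IsBrModuleAlgebra k H A comul counit c s ρ) (x : H ⊗[k] H) (a : A) :
    LinearMap.mul' k A (act₂ s ρ (x ⊗ₜ[k] ((1 : A) ⊗ₜ[k] a)))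
      = brActMap k H A ρ (TensorProduct.lid k H (counit.rTensor H x) ⊗ₜ[k] a) := by
  induction x using TensorProduct.induction_on with
  | zero => simp
  | add u w hu hw => simp only [map_add, add_tmul, hu, hw]
  | tmul h g => simp [act₂, braidedTensorMap, hs.unit_A, hma.one_act]

lemma mul'_act₂_tmul_one (hs : IsBrTransposition k H A comul counit c s)
    (hma : IsBrModuleAlgebra k H A comul counit c s ρ) (x : H ⊗[k] H) (a : A) :
    LinearMap.mul' k A (act₂ s ρ (x ⊗ₜ[k] (a ⊗ₜ[k] (1 : A))))
      = brActMap k H A ρ (TensorProduct.rid k H (counit.lTensor H x) ⊗ₜ[k] a) := by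
  induction x using TensorProduct.induction_on with
  | zero => simp
  | add u w hu hw => simp only [map_add, add_tmul, hu, hw]
  | tmul h g => ?_
  have hcounit : TensorProduct.rid k A (counit.lTensor A (s (g ⊗ₜ[k] a))) = counit g • a := by
    simpa using LinearMap.congr_fun hs.counit_compat (g ⊗ₜ[k] a)
  calc _ = ρ h (TensorProduct.rid k A (counit.lTensor A (s (g ⊗ₜ[k] a)))) := ?_
    _ = _ := by simp [hcounit]
  simp only [act₂, braidedTensorMap_tmul, LinearEquiv.coe_coe]
  induction s (g ⊗ₜ[k] a) using TensorProduct.induction_on with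
  | zero => simp
  | add u w hu hw => simp only [map_add, add_tmul, tmul_add, hu, hw]
  | tmul a' g' => simp [hma.one_act]

lemma act₃_assoc_tmul_one (hs : IsBrTransposition k H A comul counit c s) (y : H ⊗[k] H)
    (a b d : A) :
    act₃ s ρ (TensorProduct.assoc k H H H (y ⊗ₜ[k] 1) ⊗ₜ[k] (a ⊗ₜ[k] (b ⊗ₜ[k] d)))
      = TensorProduct.assoc k A A A (act₂ s ρ (y ⊗ₜ[k] (a ⊗ₜ[k] b)) ⊗ₜ[k] d) := by
  rw [← TensorProduct.assoc_tmul a b d, act₃, act₂, braidedTensorMap_assoc]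
  simp [braidedTensorMap, hs.unit_H]

lemma act₃_one_tmul {y : H ⊗[k] H} {a : A}
    (hy : braidPast s.toLinearMap s.toLinearMap (y ⊗ₜ[k] a) = a ⊗ₜ[k] y) (w : A ⊗[k] A) :
    act₃ s ρ (((1 : H) ⊗ₜ[k] y) ⊗ₜ[k] (a ⊗ₜ[k] w)) = a ⊗ₜ[k] act₂ s ρ (y ⊗ₜ[k] w) := by
  simp [act₃, braidedTensorMap, hy]

lemma mul'_act₂_tmul_mul' (hs : IsBrTransposition k H A comul counit c s)
    (hma : IsBrModuleAlgebra k H A comul counit c s ρ) (x : H ⊗[k] H) (a : A) (w : A ⊗[k] A) :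
    LinearMap.mul' k A (act₂ s ρ (x ⊗ₜ[k] (a ⊗ₜ[k] LinearMap.mul' k A w)))
      = mul₃ k A (act₃ s ρ (comul.lTensor H x ⊗ₜ[k] (a ⊗ₜ[k] w))) := by
  induction x using TensorProduct.induction_on with
  | zero => simp
  | add u v hu hv => simp only [map_add, add_tmul, hu, hv]
  | tmul h g => ?_
  have hcomul : braidPast s.toLinearMap s.toLinearMap (comul g ⊗ₜ[k] a)
      = comul.lTensor A (s (g ⊗ₜ[k] a)) := by
    simpa using (LinearMap.congr_fun hs.comul_compat (g ⊗ₜ[k] a)).symm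
  simp only [act₃, LinearMap.lTensor_tmul, braidedTensorMap_tmul, hcomul]
  rw [act₂, braidedTensorMap_tmul]
  induction s (g ⊗ₜ[k] a) using TensorProduct.induction_on with
  | zero => simp
  | add u v hu hv => simp only [map_add, add_tmul, tmul_add, hu, hv]
  | tmul a' g' => simp [mul₃, hma.act_mul', act₂]

lemma mul'_act₂_mul'_tmul (hs : IsBrTransposition k H A comul counit c s)
    (hma : IsBrModuleAlgebra k H A comul counit c s ρ) (x : H ⊗[k] H) (w : A ⊗[k] A) (d : A) :
    LinearMap.mul' k A (act₂ s ρ (x ⊗ₜ[k] (LinearMap.mul' k A w ⊗ₜ[k] d)))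
      = mul₃ k A (act₃ s ρ (TensorProduct.assoc k H H H (comul.rTensor H x)
          ⊗ₜ[k] TensorProduct.assoc k A A A (w ⊗ₜ[k] d))) := by
  rw [act₃, act₂, braidedTensorMap_assoc, mul₃_assoc]
  induction x using TensorProduct.induction_on with
  | zero => simp
  | add u v hu hv => simp only [map_add, add_tmul, hu, hv]
  | tmul h g => ?_
  have hmul : s (g ⊗ₜ[k] LinearMap.mul' k A w)
      = (LinearMap.mul' k A).rTensor H (braidUnder s.toLinearMap s.toLinearMap (g ⊗ₜ[k] w)) := by
    simpa using LinearMap.congr_fun hs.mul_A (g ⊗ₜ[k] w)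
  simp only [LinearMap.rTensor_tmul, braidedTensorMap_tmul, LinearEquiv.coe_coe, hmul]
  obtain ⟨S, hS⟩ := TensorProduct.exists_finset
    (braidUnder s.toLinearMap s.toLinearMap (g ⊗ₜ[k] w) : (A ⊗[k] A) ⊗[k] H)
  simp [hS, TensorProduct.sum_tmul, TensorProduct.tmul_sum, hma.act_mul', act₂]

end ModuleAlgebra
end Paper

open Paper in
theorem statement_0_general {k : Type*} [Field k]
    (H : Type*) [Ring H] [Algebra k H]
    (comul : H →ₗ[k] H ⊗[k] H) (counit : H →ₗ[k] k)
    (c : H ⊗[k] H ≃ₗ[k] H ⊗[k] H)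
    (A : Type*) [Ring A] [Algebra k A]
    (s : H ⊗[k] A ≃ₗ[k] A ⊗[k] H)
    (hs : IsBrTransposition k H A comul counit c s)
    (ρ : H →ₐ[k] Module.End k A)
    (hma : IsBrModuleAlgebra k H A comul counit c s ρ)
    (F : H ⊗[k] H)
    (hF : IsTwistingElement k H comul counit c F)
    (hsF : ∀ a : A, braidPast s.toLinearMap s.toLinearMap (F ⊗ₜ[k] a) = a ⊗ₜ[k] F) :
    -- the twisted multiplication of `A_F`
    let mulF : A → A → A := fun a b =>
      (LinearMap.mul' k A
        ∘ₗ TensorProduct.map (brActMap k H A ρ) (brActMap k H A ρ)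
        ∘ₗ midMap s.toLinearMap) (F ⊗ₜ[k] (a ⊗ₜ[k] b))
    -- `A_F` is a unital associative algebra with unit `1_A`
    (∀ a : A, mulF 1 a = a) ∧ (∀ a : A, mulF a 1 = a)
      ∧ ∀ a b d : A, mulF (mulF a b) d = mulF a (mulF b d) := by
  intro mulF
  obtain ⟨hF_left, hF_right, hF_cocycle, -⟩ := hF
  have hmulF : ∀ a b, mulF a b = LinearMap.mul' k A (act₂ s ρ (F ⊗ₜ[k] (a ⊗ₜ[k] b))) :=
    fun _ _ => rfl
  refine ⟨fun a => ?_, fun a => ?_, fun a b d => ?_⟩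
  · simp [hmulF, mul'_act₂_one_tmul hs hma, hF_left]
  · simp [hmulF, mul'_act₂_tmul_one hs hma, hF_right]
  calc mulF (mulF a b) d
      = mul₃ k A (act₃ s ρ (TensorProduct.assoc k H H H (comul.rTensor H F)
          ⊗ₜ[k] act₃ s ρ (TensorProduct.assoc k H H H (F ⊗ₜ[k] 1)
            ⊗ₜ[k] (a ⊗ₜ[k] (b ⊗ₜ[k] d))))) := by
        rw [hmulF, hmulF, mul'_act₂_mul'_tmul hs hma, act₃_assoc_tmul_one hs]
    _ = mul₃ k A (act₃ s ρ (comul.lTensor H F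
          ⊗ₜ[k] act₃ s ρ (((1 : H) ⊗ₜ[k] F) ⊗ₜ[k] (a ⊗ₜ[k] (b ⊗ₜ[k] d))))) := by
        rw [← isAction_act₃ hs hma, hF_cocycle, isAction_act₃ hs hma]
    _ = mulF a (mulF b d) := by
        rw [act₃_one_tmul (hsF a), hmulF, hmulF, mul'_act₂_tmul_mul' hs hma]

open Paper in
/-- A twisting element `F` based on a braided bialgebra `H`, satisfying
`(s ⊗ H)∘(H ⊗ s)(F ⊗ a) = a ⊗ F` on a left `H`-braided module algebra `(A, s)`, yields an
associative unital multiplication `μ_A ∘ F_l` on `A`. -/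
theorem statement_0 {k : Type*} [Field k]
    (H : Type*) [Ring H] [Algebra k H]
    (comul : H →ₗ[k] H ⊗[k] H) (counit : H →ₗ[k] k)
    (c : H ⊗[k] H ≃ₗ[k] H ⊗[k] H)
    (hbb : IsBraidedBialgebra k H comul counit c)
    (A : Type*) [Ring A] [Algebra k A]
    (s : H ⊗[k] A ≃ₗ[k] A ⊗[k] H)
    (hs : IsBrTransposition k H A comul counit c s)
    (ρ : H →ₐ[k] Module.End k A)
    (hma : IsBrModuleAlgebra k H A comul counit c s ρ)
    (F : H ⊗[k] H)
    (hF : IsTwistingElement k H comul counit c F)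
    (hsF : ∀ a : A, braidPast s.toLinearMap s.toLinearMap (F ⊗ₜ[k] a) = a ⊗ₜ[k] F) :
    -- the twisted multiplication of `A_F`
    let mulF : A → A → A := fun a b =>
      (LinearMap.mul' k A
        ∘ₗ TensorProduct.map (brActMap k H A ρ) (brActMap k H A ρ)
        ∘ₗ midMap s.toLinearMap) (F ⊗ₜ[k] (a ⊗ₜ[k] b))
    -- `A_F` is a unital associative algebra with unit `1_A`
    (∀ a : A, mulF 1 a = a) ∧ (∀ a : A, mulF a 1 = a)
      ∧ ∀ a b d : A, mulF (mulF a b) d = mulF a (mulF b d) :=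
  statement_0_general H comul counit c A s hs ρ hma F hF hsF
end
end

section
/- Let A be a k-algebra and let ς, δ_1, δ_2 : A → A be k-linear maps. There exists a (necessarily unique) left H_q-module structure ρ : H_q⊗A → A on A with ρ(σ⊗a) = ς(a), ρ(D_1⊗a) = δ_1(a) and ρ(D_2⊗a) = δ_2(a) for all a ∈ A if and only if: (1) ς is bijective; (2) δ_1∘δ_2 = δ_2∘δ_1; (3) qς∘δ_i = δ_i∘ς for i = 1,2; and (4) if q ≠ 1 and q^l = 1, then δ_1^l = δ_2^l = 0. -/
open TensorProduct

noncomputable section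
namespace Paper

variable {k : Type*} [Field k]

section Hq

variable (k)
variable (H : Type*) [Ring H]

/-- Axiomatisation of the Hopf algebra `H_q`. -/
structure HqData [HopfAlgebra k H] (q : k) where
  D₁ : H
  D₂ : H
  σ : Hˣ
  D_comm : D₁ * D₂ = D₂ * D₁
  σD₁ : q • ((σ : H) * D₁) = D₁ * (σ : H)
  σD₂ : q • ((σ : H) * D₂) = D₂ * (σ : H)
  comul_D₁ : Coalgebra.comul (R := k) D₁ = D₁ ⊗ₜ[k] (σ : H) + 1 ⊗ₜ[k] D₁
  comul_D₂ : Coalgebra.comul (R := k) D₂ = D₂ ⊗ₜ[k] (1 : H) + (σ : H) ⊗ₜ[k] D₂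
  comul_σ : Coalgebra.comul (R := k) ((σ : H)) = (σ : H) ⊗ₜ[k] (σ : H)
  counit_D₁ : Coalgebra.counit (R := k) D₁ = 0
  counit_D₂ : Coalgebra.counit (R := k) D₂ = 0
  counit_σ : Coalgebra.counit (R := k) ((σ : H)) = 1
  basis_generic : (∀ l : ℕ, 2 ≤ l → ¬ IsPrimitiveRoot q l) →
      ∃ b : Module.Basis (ℤ × ℕ × ℕ) k H,
        ∀ i j m, b (i, j, m) = ((σ ^ i : Hˣ) : H) * D₁ ^ j * D₂ ^ m
  basis_root : ∀ l : ℕ, 2 ≤ l → IsPrimitiveRoot q l →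
      D₁ ^ l = 0 ∧ D₂ ^ l = 0 ∧
      ∃ b : Module.Basis (ℤ × Fin l × Fin l) k H,
        ∀ i j m, b (i, j, m) = ((σ ^ i : Hˣ) : H) * D₁ ^ (j : ℕ) * D₂ ^ (m : ℕ)

variable (A : Type*) [Ring A] [Algebra k A]

/-- A left transposition of a (standard, flip-braided) bialgebra `H` on an algebra `A`. -/
structure IsTransposition [HopfAlgebra k H] (s : H ⊗[k] A ≃ₗ[k] A ⊗[k] H) : Prop where
  unit_H : ∀ a : A, s ((1 : H) ⊗ₜ[k] a) = a ⊗ₜ[k] (1 : H)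
  mul_H : s.toLinearMap ∘ₗ (LinearMap.mul' k H).rTensor A
      = (LinearMap.mul' k H).lTensor A ∘ₗ braidPast s.toLinearMap s.toLinearMap
  counit_compat : (TensorProduct.rid k A).toLinearMap
        ∘ₗ (Coalgebra.counit (R := k) (A := H)).lTensor A ∘ₗ s.toLinearMap
      = (TensorProduct.lid k A).toLinearMap ∘ₗ (Coalgebra.counit (R := k) (A := H)).rTensor A
  comul_compat : (Coalgebra.comul (R := k) (A := H)).lTensor A ∘ₗ s.toLinearMap
      = braidPast s.toLinearMap s.toLinearMap ∘ₗ (Coalgebra.comul (R := k) (A := H)).rTensor A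
  unit_A : ∀ h : H, s (h ⊗ₜ[k] (1 : A)) = (1 : A) ⊗ₜ[k] h
  mul_A : s.toLinearMap ∘ₗ (LinearMap.mul' k A).lTensor H
      = (LinearMap.mul' k A).rTensor H ∘ₗ braidUnder s.toLinearMap s.toLinearMap
  braid_compat : braidPast s.toLinearMap s.toLinearMap
        ∘ₗ (TensorProduct.comm k H H).toLinearMap.rTensor A
      = (TensorProduct.comm k H H).toLinearMap.lTensor A
        ∘ₗ braidPast s.toLinearMap s.toLinearMap

/-- The action `H ⊗ A → A` attached to an algebra morphism `H →ₐ Module.End k A`. -/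
def actMap [HopfAlgebra k H] (ρ : H →ₐ[k] Module.End k A) : H ⊗[k] A →ₗ[k] A :=
  TensorProduct.lift ρ.toLinearMap

/-- `(A, s)` is a left `H`-braided module algebra via the action `ρ`
(braid of `H` = flip). -/
structure IsModuleAlgebra [HopfAlgebra k H] (s : H ⊗[k] A ≃ₗ[k] A ⊗[k] H)
    (ρ : H →ₐ[k] Module.End k A) : Prop where
  compat_s : s.toLinearMap ∘ₗ (actMap k H A ρ).lTensor H
        ∘ₗ (TensorProduct.assoc k H H A).toLinearMap
      = (actMap k H A ρ).rTensor H
        ∘ₗ (TensorProduct.assoc k H A H).symm.toLinearMap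
        ∘ₗ s.toLinearMap.lTensor H
        ∘ₗ (TensorProduct.assoc k H H A).toLinearMap
        ∘ₗ (TensorProduct.comm k H H).toLinearMap.rTensor A
  mul_act : ∀ (h : H) (a b : A), ρ h (a * b)
      = (LinearMap.mul' k A
          ∘ₗ TensorProduct.map (actMap k H A ρ) (actMap k H A ρ)
          ∘ₗ midMap s.toLinearMap)
        ((Coalgebra.comul (R := k) h) ⊗ₜ[k] (a ⊗ₜ[k] b))
  one_act : ∀ h : H, ρ h (1 : A) = Coalgebra.counit (R := k) h • (1 : A)

/-- `s` is a *good* transposition. -/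
def GoodTransposition {q : k} [HopfAlgebra k H] (hq : HqData k H q)
    (s : H ⊗[k] A ≃ₗ[k] A ⊗[k] H) : Prop :=
  ∀ a : A, braidPast s.toLinearMap s.toLinearMap ((hq.D₁ ⊗ₜ[k] hq.D₂) ⊗ₜ[k] a)
    = a ⊗ₜ[k] (hq.D₁ ⊗ₜ[k] hq.D₂)

end Hq


section Crossed

variable {G : Type*} [Group G] {V : Type*} [AddCommGroup V] [Module k V]

variable (G) in
/-- `f` is a normal 2-cocycle on `G` with values in `kˣ`. -/
structure IsCocycle (f : G → G → kˣ) : Prop where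
  one_left : ∀ g, f 1 g = 1
  one_right : ∀ g, f g 1 = 1
  cocycle : ∀ g h l, f g h * f (g * h) l = f g (h * l) * f h l

variable (A : Type*) [Ring A] [Algebra k A]

/-- Axiomatisation of the crossed product `S(V) #_f G`:  `A` is generated by a copy of `V`
(with commuting elements, generating a copy of the symmetric algebra) and elements `w g`,
and is free as a module over the symmetric part with basis `{w g}`. -/
structure CrossedProduct (ρV : Representation k G V) (f : G → G → kˣ) where
  ι : V →ₗ[k] A
  w : G → A
  w_one : w 1 = 1
  ι_comm : ∀ v v', ι v * ι v' = ι v' * ι v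
  w_ι : ∀ g v, w g * ι v = ι (ρV g v) * w g
  w_mul : ∀ g h, w g * w h = (f g h : k) • w (g * h)
  isBasis : ∀ {n : ℕ} (bV : Module.Basis (Fin n) k V),
      ∃ bA : Module.Basis ((Fin n → ℕ) × G) k A,
        ∀ d g, bA (d, g) = (List.ofFn fun i => ι (bV i) ^ d i).prod * w g

namespace CrossedProduct

variable {A} {ρV : Representation k G V} {f : G → G → kˣ}

/-- The product in `A` of the images of a list of elements of `V`. -/
def mon (cp : CrossedProduct A ρV f) (l : List V) : A := (l.map cp.ι).prod

/-- `v₁ ⋯ v_{j-1}` : the image of the prefix of a monomial. -/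
def pre (cp : CrossedProduct A ρV f) {m : ℕ} (v : Fin m → V) (j : Fin m) : A :=
  cp.mon ((List.ofFn v).take j)

/-- `v_{j+1} ⋯ v_m` : the image of the suffix of a monomial. -/
def suf (cp : CrossedProduct A ρV f) {m : ℕ} (v : Fin m → V) (j : Fin m) : A :=
  cp.mon ((List.ofFn v).drop (j + 1))

/-- The subalgebra `S(V)` of the crossed product. -/
def SV (cp : CrossedProduct A ρV f) : Subalgebra k A :=
  Algebra.adjoin k (Set.range cp.ι)

/-- The subalgebra `S(W)` of the crossed product, for a subspace `W ≤ V`. -/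
def SW (cp : CrossedProduct A ρV f) (W : Submodule k V) : Subalgebra k A :=
  Algebra.adjoin k (cp.ι '' (W : Set V))

end CrossedProduct

/-- A linear endomorphism of `V` is `k[G]`-linear if it commutes with the `G`-action. -/
def GLinear (ρV : Representation k G V) (φ : V →ₗ[k] V) : Prop :=
  ∀ g v, φ (ρV g v) = ρV g (φ v)

variable (G) in
/-- `χ : G → kˣ` is a group homomorphism. -/
def IsCharacter (χ : G → kˣ) : Prop := ∀ g h, χ (g * h) = χ g * χ h

section Defs

variable {H : Type*} [Ring H] [HopfAlgebra k H] {q : k}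
variable {ρV : Representation k G V} {f : G → G → kˣ}

/-- `s` is the (good) transposition of `H_q` on `A` associated with the automorphism `α`. -/
def AssocTransposition (hq : HqData k H q)
    (s : H ⊗[k] A ≃ₗ[k] A ⊗[k] H) (α : A ≃ₐ[k] A) : Prop :=
  IsTransposition k H A s ∧ GoodTransposition k H A hq s
    ∧ (∀ a : A, s (hq.D₁ ⊗ₜ[k] a) = α a ⊗ₜ[k] hq.D₁)
    ∧ (∀ a : A, s (hq.D₂ ⊗ₜ[k] a) = α.symm a ⊗ₜ[k] hq.D₂)

variable {A}

/-- `ς` is the endomorphism of `A` determined by `ς̂` and `χ_ς`. -/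
def SigmaDef (cp : CrossedProduct A ρV f) (ςhat : V →ₗ[k] V) (χς : G → kˣ)
    (ς : Module.End k A) : Prop :=
  ∀ (m : ℕ) (v : Fin m → V) (g : G),
    ς (cp.mon (List.ofFn v) * cp.w g)
      = (χς g : k) • (cp.mon (List.ofFn fun i => ςhat (v i)) * cp.w g)

/-- `δ₁` is determined by `δ̂₁`, `δ̄₁` via the `(α, ς)`-twisted Leibniz formula. -/
def Delta1Def (cp : CrossedProduct A ρV f) (α : A ≃ₐ[k] A) (ς : Module.End k A)
    (δhat : V →ₗ[k] A) (δbar : G → A) (δ : Module.End k A) : Prop :=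
  ∀ (m : ℕ) (v : Fin m → V) (g : G),
    δ (cp.mon (List.ofFn v) * cp.w g)
      = (∑ j : Fin m, α (cp.pre v j) * δhat (v j) * ς (cp.suf v j * cp.w g))
        + α (cp.mon (List.ofFn v)) * δbar g

/-- `δ₂` is determined by `δ̂₂`, `δ̄₂` via the `(ς ∘ α⁻¹, id)`-twisted Leibniz formula. -/
def Delta2Def (cp : CrossedProduct A ρV f) (α : A ≃ₐ[k] A) (ς : Module.End k A)
    (δhat : V →ₗ[k] A) (δbar : G → A) (δ : Module.End k A) : Prop :=
  ∀ (m : ℕ) (v : Fin m → V) (g : G),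
    δ (cp.mon (List.ofFn v) * cp.w g)
      = (∑ j : Fin m, ς (α.symm (cp.pre v j)) * δhat (v j) * (cp.suf v j * cp.w g))
        + ς (α.symm (cp.mon (List.ofFn v))) * δbar g

/-- There is an `H_q`-braided module algebra structure on `(A, s)` with the
prescribed values of the action on `V` and on the `w_g`. -/
def HasHqModuleStructure (hq : HqData k H q) (cp : CrossedProduct A ρV f)
    (s : H ⊗[k] A ≃ₗ[k] A ⊗[k] H) (ςhat : V →ₗ[k] V) (χς : G → kˣ)
    (δhat1 δhat2 : V →ₗ[k] A) (δbar1 δbar2 : G → A) : Prop :=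
  ∃ ρ : H →ₐ[k] Module.End k A, IsModuleAlgebra k H A s ρ
    ∧ (∀ v : V, ρ (hq.σ : H) (cp.ι v) = cp.ι (ςhat v))
    ∧ (∀ g : G, ρ (hq.σ : H) (cp.w g) = (χς g : k) • cp.w g)
    ∧ (∀ v : V, ρ hq.D₁ (cp.ι v) = δhat1 v)
    ∧ (∀ g : G, ρ hq.D₁ (cp.w g) = δbar1 g)
    ∧ (∀ v : V, ρ hq.D₂ (cp.ι v) = δhat2 v)
    ∧ (∀ g : G, ρ hq.D₂ (cp.w g) = δbar2 g)

end Defs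

end Crossed

end Paper

/-!
`H_q` has a basis of ordered monomials `σ^i D₁^j D₂^m` (with `j, m < l` when `q` is a primitive
`l`-th root of unity). The defining relations reorder a product of two ordered monomials into the
single monomial with added exponents, times `q^(i'(j+m))`, and this computation is the same in
`H_q` and in any algebra containing a unit `u` and commuting elements `e₁, e₂` with
`q u eᵢ = eᵢ u`. So the linear map sending each basis monomial to the corresponding monomial in
`u, e₁, e₂` is multiplicative; it is the only algebra map with these values on `σ, D₁, D₂`
because the monomials span `H_q`. Conversely an algebra map carries the relations and the
nilpotency of `D₁, D₂` over, and the image of the unit `σ` is invertible.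
-/

section TwistedCommute

variable {R S : Type*} [CommSemiring R] [Semiring S] [Algebra R S]

theorem twisted_comm_mul {a b : R} {x d e : S} (hd : a • (x * d) = d * x)
    (he : b • (x * e) = e * x) : (a * b) • (x * (d * e)) = d * e * x := by
  calc (a * b) • (x * (d * e)) = b • (a • (x * d) * e) := by
        rw [smul_mul_assoc, smul_smul, mul_comm, mul_assoc]
    _ = d * e * x := by rw [hd, mul_assoc, ← mul_smul_comm, he, mul_assoc]

theorem twisted_comm_pow {a : R} {x d : S} (h : a • (x * d) = d * x) (n : ℕ) :
    a ^ n • (x * d ^ n) = d ^ n * x := by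
  induction n with
  | zero => simp
  | succ n ih => rw [pow_succ, pow_succ, twisted_comm_mul ih h]

end TwistedCommute

section HqRelations

variable {k S T : Type*} [Semifield k] [Semiring S] [Algebra k S] [Semiring T] [Algebra k T]

theorem twisted_comm_units_zpow {a : k} (ha : a ≠ 0) {x : Sˣ} {d : S}
    (h : a • ((x : S) * d) = d * x) (i : ℤ) : a ^ i • (((x ^ i : Sˣ) : S) * d) = d * ↑(x ^ i) := by
  set c : Sˣ := Units.map (algebraMap k S : k →* S) (Units.mk0 a ha)
  have hc : ((c ^ i : Sˣ) : S) = algebraMap k S (a ^ i) := by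
    rw [← map_zpow, Units.coe_map, Units.val_zpow_eq_zpow_val, Units.val_mk0]
    rfl
  -- `d` semiconjugates the unit `x` to the unit `a • x`
  have hsemiconj : SemiconjBy d x ↑(c * x) := by
    simp [SemiconjBy, c, ← h, Algebra.smul_def, mul_assoc]
  have hpow := hsemiconj.units_zpow_right i
  have hcx : Commute c x := Commute.units_of_val (Algebra.commute_algebraMap_left a (x : S))
  rw [SemiconjBy, hcx.mul_zpow, Units.val_mul, hc, ← Algebra.smul_def, smul_mul_assoc] at hpow
  exact hpow.symm

structure HqRelations (q : k) (u : Sˣ) (d₁ d₂ : S) : Prop where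
  comm : Commute d₁ d₂
  twist₁ : q • ((u : S) * d₁) = d₁ * u
  twist₂ : q • ((u : S) * d₂) = d₂ * u

def orderedMonomial (u : Sˣ) (d₁ d₂ : S) (p : ℤ × ℕ × ℕ) : S :=
  ((u ^ p.1 : Sˣ) : S) * d₁ ^ p.2.1 * d₂ ^ p.2.2

variable {q : k} {u : Sˣ} {d₁ d₂ : S}

theorem HqRelations.orderedMonomial_mul (h : HqRelations q u d₁ d₂) (hq : q ≠ 0)
    (p p' : ℤ × ℕ × ℕ) :
    orderedMonomial u d₁ d₂ p * orderedMonomial u d₁ d₂ p'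
      = (q ^ p'.1) ^ (p.2.1 + p.2.2) • orderedMonomial u d₁ d₂ (p + p') := by
  obtain ⟨i, j, m⟩ := p
  obtain ⟨i', j', m'⟩ := p'
  have hpast : (q ^ i') ^ (j + m) • (((u ^ i' : Sˣ) : S) * (d₁ ^ j * d₂ ^ m))
      = d₁ ^ j * d₂ ^ m * ↑(u ^ i') := by
    rw [pow_add]
    exact twisted_comm_mul (twisted_comm_pow (twisted_comm_units_zpow hq h.twist₁ i') j)
      (twisted_comm_pow (twisted_comm_units_zpow hq h.twist₂ i') m)
  have hd : d₁ ^ j * d₂ ^ m * (d₁ ^ j' * d₂ ^ m') = d₁ ^ (j + j') * d₂ ^ (m + m') := by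
    rw [mul_assoc, ← mul_assoc (d₂ ^ m), ((h.comm.symm).pow_pow m j').eq, pow_add, pow_add]
    simp only [mul_assoc]
  simp only [orderedMonomial, Prod.mk_add_mk]
  calc ((u ^ i : Sˣ) : S) * d₁ ^ j * d₂ ^ m * (↑(u ^ i') * d₁ ^ j' * d₂ ^ m')
      = ↑(u ^ i) * (d₁ ^ j * d₂ ^ m * ↑(u ^ i')) * (d₁ ^ j' * d₂ ^ m') := by
        simp only [mul_assoc]
    _ = (q ^ i') ^ (j + m) • (↑(u ^ i) * ↑(u ^ i') * (d₁ ^ j * d₂ ^ m * (d₁ ^ j' * d₂ ^ m'))) := by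
        rw [← hpast, mul_smul_comm, smul_mul_assoc]
        simp only [mul_assoc]
    _ = _ := by rw [hd, ← Units.val_mul, ← zpow_add, mul_assoc]

theorem orderedMonomial_eq_zero {l : ℕ} (h₁ : d₁ ^ l = 0) (h₂ : d₂ ^ l = 0)
    {p : ℤ × ℕ × ℕ} (hp : l ≤ p.2.1 ∨ l ≤ p.2.2) : orderedMonomial u d₁ d₂ p = 0 := by
  rcases hp with hp | hp
  · simp [orderedMonomial, pow_eq_zero_of_le hp h₁]
  · simp [orderedMonomial, pow_eq_zero_of_le hp h₂]

theorem AlgHom.map_orderedMonomial (f : S →ₐ[k] T) (p : ℤ × ℕ × ℕ) :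
    f (orderedMonomial u d₁ d₂ p) = orderedMonomial (Units.map f u) (f d₁) (f d₂) p := by
  simp [orderedMonomial, ← map_zpow]

theorem HqRelations.map (h : HqRelations q u d₁ d₂) (f : S →ₐ[k] T) :
    HqRelations q (Units.map f u) (f d₁) (f d₂) where
  comm := h.comm.map f
  twist₁ := by simp [← map_mul, ← map_smul, h.twist₁]
  twist₂ := by simp [← map_mul, ← map_smul, h.twist₂]

end HqRelations

section Extension

variable {k H S : Type*} [Semifield k] [Semiring H] [Algebra k H] [Semiring S] [Algebra k S]
  {q : k} {σ : Hˣ} {D₁ D₂ : H} {u : Sˣ} {e₁ e₂ : S}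

theorem map_mul_of_map_orderedMonomial (hq : q ≠ 0) (hH : HqRelations q σ D₁ D₂)
    (hS : HqRelations q u e₁ e₂)
    (hspan : Submodule.span k (Set.range (orderedMonomial σ D₁ D₂)) = ⊤) {F : H →ₗ[k] S}
    (hF : ∀ p, F (orderedMonomial σ D₁ D₂ p) = orderedMonomial u e₁ e₂ p) (x y : H) :
    F (x * y) = F x * F y := by
  have hbilin : (LinearMap.mul k H).compr₂ F = (LinearMap.mul k S).compl₁₂ F F := by
    refine LinearMap.ext_on_range hspan fun p => LinearMap.ext_on_range hspan fun p' => ?_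
    simp only [LinearMap.compr₂_apply, LinearMap.compl₁₂_apply, LinearMap.mul_apply']
    rw [hH.orderedMonomial_mul hq, map_smul, hF, hF, hF, hS.orderedMonomial_mul hq]
  exact LinearMap.congr_fun₂ hbilin x y

theorem existsUnique_algHom_of_map_orderedMonomial (hq : q ≠ 0) (hH : HqRelations q σ D₁ D₂)
    (hS : HqRelations q u e₁ e₂)
    (hspan : Submodule.span k (Set.range (orderedMonomial σ D₁ D₂)) = ⊤) {F : H →ₗ[k] S}
    (hF : ∀ p, F (orderedMonomial σ D₁ D₂ p) = orderedMonomial u e₁ e₂ p) :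
    ∃! ρ : H →ₐ[k] S, ρ σ = u ∧ ρ D₁ = e₁ ∧ ρ D₂ = e₂ := by
  have hF₁ : F 1 = 1 := by simpa [orderedMonomial] using hF 0
  refine ⟨AlgHom.ofLinearMap F hF₁ (map_mul_of_map_orderedMonomial hq hH hS hspan hF),
    ⟨by simpa [orderedMonomial] using hF (1, 0, 0), by simpa [orderedMonomial] using hF (0, 1, 0),
      by simpa [orderedMonomial] using hF (0, 0, 1)⟩, ?_⟩
  rintro ρ ⟨hσ, h₁, h₂⟩
  have hu : Units.map (ρ : H →* S) σ = u := Units.ext hσ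
  ext x
  refine LinearMap.congr_fun (LinearMap.ext_on_range hspan fun p => ?_ : ρ.toLinearMap = F) x
  simp only [AlgHom.toLinearMap_apply, ρ.map_orderedMonomial, hF]
  rw [hu, h₁, h₂]

end Extension

namespace Paper.HqData

variable {k H S : Type*} [Field k] [Ring H] [HopfAlgebra k H] [Semiring S] [Algebra k S] {q : k}
  (hq : HqData k H q)

theorem hqRelations : HqRelations q hq.σ hq.D₁ hq.D₂ := ⟨hq.D_comm, hq.σD₁, hq.σD₂⟩

theorem exists_basis_orderedMonomial :
    ∃ (ι : Type) (b : Module.Basis ι k H) (π : ι → ℤ × ℕ × ℕ),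
      (∀ i, b i = orderedMonomial hq.σ hq.D₁ hq.D₂ (π i)) ∧
      ∀ p ∉ Set.range π, ∃ l, 2 ≤ l ∧ IsPrimitiveRoot q l ∧ (l ≤ p.2.1 ∨ l ≤ p.2.2) := by
  by_cases hroot : ∃ l, 2 ≤ l ∧ IsPrimitiveRoot q l
  · obtain ⟨l, hl, hprim⟩ := hroot
    obtain ⟨-, -, b, hb⟩ := hq.basis_root l hl hprim
    refine ⟨_, b, fun p => (p.1, p.2.1, p.2.2), fun p => hb p.1 p.2.1 p.2.2, ?_⟩
    rintro ⟨i, j, m⟩ hp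
    refine ⟨l, hl, hprim, ?_⟩
    by_contra! hjm
    exact hp ⟨(i, ⟨j, hjm.1⟩, ⟨m, hjm.2⟩), rfl⟩
  · push Not at hroot
    obtain ⟨b, hb⟩ := hq.basis_generic hroot
    exact ⟨_, b, id, fun p => hb p.1 p.2.1 p.2.2, fun p hp => (hp (Set.mem_range_self p)).elim⟩

theorem span_orderedMonomial :
    Submodule.span k (Set.range (orderedMonomial hq.σ hq.D₁ hq.D₂)) = ⊤ := by
  obtain ⟨ι, b, π, hb, -⟩ := hq.exists_basis_orderedMonomial
  refine eq_top_mono (Submodule.span_mono ?_) b.span_eq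
  rintro _ ⟨i, rfl⟩
  exact ⟨π i, (hb i).symm⟩

theorem map_pow_eq_zero (ρ : H →ₐ[k] S) {l : ℕ} (hl : 2 ≤ l) (hprim : IsPrimitiveRoot q l) :
    ρ hq.D₁ ^ l = 0 ∧ ρ hq.D₂ ^ l = 0 := by
  obtain ⟨h₁, h₂, -⟩ := hq.basis_root l hl hprim
  simp [← map_pow, h₁, h₂]

theorem exists_linearMap_orderedMonomial (u : Sˣ) (e₁ e₂ : S)
    (hroot : ∀ l, 2 ≤ l → IsPrimitiveRoot q l → e₁ ^ l = 0 ∧ e₂ ^ l = 0) :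
    ∃ F : H →ₗ[k] S, ∀ p,
      F (orderedMonomial hq.σ hq.D₁ hq.D₂ p) = orderedMonomial u e₁ e₂ p := by
  obtain ⟨ι, b, π, hb, hπ⟩ := hq.exists_basis_orderedMonomial
  refine ⟨b.constr k (orderedMonomial u e₁ e₂ ∘ π), fun p => ?_⟩
  by_cases hp : p ∈ Set.range π
  · obtain ⟨i, rfl⟩ := hp
    rw [← hb, b.constr_basis]
    rfl
  · obtain ⟨l, hl, hprim, hle⟩ := hπ p hp
    obtain ⟨hD₁, hD₂, -⟩ := hq.basis_root l hl hprim
    obtain ⟨he₁, he₂⟩ := hroot l hl hprim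
    rw [orderedMonomial_eq_zero hD₁ hD₂ hle, orderedMonomial_eq_zero he₁ he₂ hle, map_zero]

theorem existsUnique_algHom (hq0 : q ≠ 0) {u : Sˣ} {e₁ e₂ : S} (hS : HqRelations q u e₁ e₂)
    (hroot : ∀ l, 2 ≤ l → IsPrimitiveRoot q l → e₁ ^ l = 0 ∧ e₂ ^ l = 0) :
    ∃! ρ : H →ₐ[k] S, ρ hq.σ = u ∧ ρ hq.D₁ = e₁ ∧ ρ hq.D₂ = e₂ := by
  obtain ⟨F, hF⟩ := hq.exists_linearMap_orderedMonomial u e₁ e₂ hroot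
  exact existsUnique_algHom_of_map_orderedMonomial hq0 hq.hqRelations hS
    hq.span_orderedMonomial hF

end Paper.HqData

open Paper in
/-- Characterisation of the (necessarily unique) `H_q`-module structures
on `A` with prescribed action of `σ`, `D₁`, `D₂`. -/
theorem statement_5 {k : Type*} [Field k] {q : k} (hq0 : q ≠ 0)
    {H : Type*} [Ring H] [HopfAlgebra k H] (hq : HqData k H q)
    {A : Type*} [Ring A] [Algebra k A]
    (ς δ₁ δ₂ : Module.End k A) :
    (∃! ρ : H →ₐ[k] Module.End k A,
        (∀ a : A, ρ (hq.σ : H) a = ς a) ∧ (∀ a : A, ρ hq.D₁ a = δ₁ a)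
          ∧ (∀ a : A, ρ hq.D₂ a = δ₂ a))
    ↔ (Function.Bijective ς
        ∧ δ₁ ∘ₗ δ₂ = δ₂ ∘ₗ δ₁
        ∧ q • (ς ∘ₗ δ₁) = δ₁ ∘ₗ ς
        ∧ q • (ς ∘ₗ δ₂) = δ₂ ∘ₗ ς
        ∧ ∀ l : ℕ, 2 ≤ l → IsPrimitiveRoot q l → δ₁ ^ l = 0 ∧ δ₂ ^ l = 0) := by
  simp only [← LinearMap.ext_iff]
  constructor
  · rintro ⟨ρ, ⟨rfl, rfl, rfl⟩, -⟩
    obtain ⟨hcomm, h₁, h₂⟩ := hq.hqRelations.map ρ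
    exact ⟨(Module.End.isUnit_iff _).1 (hq.σ.isUnit.map ρ), hcomm.eq, h₁, h₂,
      fun l hl hprim => hq.map_pow_eq_zero ρ hl hprim⟩
  · rintro ⟨hbij, hcomm, h₁, h₂, hroot⟩
    have hς := (Module.End.isUnit_iff ς).2 hbij
    have hS : HqRelations q hς.unit δ₁ δ₂ := ⟨hcomm, h₁, h₂⟩
    simpa using hq.existsUnique_algHom hq0 hS hroot
end
end
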